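/- Let H be a reduced, commutative, cancellative, atomic monoid and let m ∈ ℕ. Then c_{ad,m}(a) ≥ μ_{ad,m}(a) for every a ∈ H, and c_{ad,m}(H) = μ_{ad,m}(H). -/

import Mathlib

namespace CMR

variable {α : Type*} [CancelCommMonoid α]

/-- The factorization monoid `Z(H)`: the free abelian monoid over the set of atoms of `H`,
modeled as multisets of atoms. -/
abbrev Fac (α : Type*) [CancelCommMonoid α] : Type _ := Multiset {u : α // Irreducible u}

/-- The factorization homomorphism `π : Z(H) → H`. -/
def piF (z : Fac α) : α := (z.map Subtype.val).prod

/-- `Z a`: the set of factorizations of `a`. -/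
def Z (a : α) : Set (Fac α) := {z | piF z = a}

/-- `L a`: the set of lengths of `a`. -/
def L (a : α) : Set ℕ := {n | ∃ z ∈ Z a, Multiset.card z = n}

/-- `Zk a k`: the factorizations of `a` of length `k`. -/
def Zk (a : α) (k : ℕ) : Set (Fac α) := {z ∈ Z a | Multiset.card z = k}

/-- `ZM a M`: the factorizations of `a` whose length lies in `M`. -/
def ZM (a : α) (M : Set ℕ) : Set (Fac α) := {z ∈ Z a | Multiset.card z ∈ M}

/-- The distance between two factorizations:
`d(z,z') = max (|z / gcd(z,z')|, |z' / gcd(z,z')|)`. -/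
noncomputable def d (z z' : Fac α) : ℕ :=
  letI := Classical.decEq {u : α // Irreducible u}
  max (Multiset.card (z - z')) (Multiset.card (z' - z))

/-- The distance between two sets of factorizations, the minimum of pairwise
distances (with the convention `sInf ∅ = 0`). -/
noncomputable def dS (X Y : Set (Fac α)) : ℕ :=
  sInf {n : ℕ | ∃ x ∈ X, ∃ y ∈ Y, d x y = n}

/-- `k` and `l` are adjacent lengths of `a` (with `k < l`):
`L(a) ∩ [k, l] = {k, l}`. -/
def Adjacent (a : α) (k l : ℕ) : Prop :=
  k ∈ L a ∧ l ∈ L a ∧ k < l ∧ ∀ m ∈ L a, k ≤ m → m ≤ l → m = k ∨ m = l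

/-- A chain of factorizations of `a` from `z` to `z'` whose consecutive members
satisfy the step predicate `P`. -/
def Chain (a : α) (P : Fac α → Fac α → Prop) (z z' : Fac α) : Prop :=
  ∃ (n : ℕ) (c : Fin (n + 1) → Fac α),
    c 0 = z ∧ c (Fin.last n) = z' ∧ (∀ i, c i ∈ Z a) ∧
    ∀ i : Fin n, P (c i.castSucc) (c i.succ)

/-- The catenary degree of an element: the smallest `N ∈ ℕ∞` such that any two
factorizations of `a` are connected by an `N`-chain. -/
noncomputable def cat (a : α) : ℕ∞ :=
  sInf {N : ℕ∞ | ∀ z ∈ Z a, ∀ z' ∈ Z a,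
    Chain a (fun x y => (d x y : ℕ∞) ≤ N) z z'}

/-- The equal catenary degree of an element: the smallest `N ∈ ℕ∞` such that any two
factorizations of `a` of the same length are connected by an equal-length `N`-chain. -/
noncomputable def ceq (a : α) : ℕ∞ :=
  sInf {N : ℕ∞ | ∀ z ∈ Z a, ∀ z' ∈ Z a, Multiset.card z = Multiset.card z' →
    Chain a (fun x y => (d x y : ℕ∞) ≤ N ∧ Multiset.card x = Multiset.card y) z z'}

/-- The monotone catenary degree of an element: the smallest `N ∈ ℕ∞` such that any two
factorizations of `a` (ordered by length) are connected by a monotone `N`-chain. -/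
noncomputable def cmon (a : α) : ℕ∞ :=
  sInf {N : ℕ∞ | ∀ z ∈ Z a, ∀ z' ∈ Z a, Multiset.card z ≤ Multiset.card z' →
    Chain a (fun x y => (d x y : ℕ∞) ≤ N ∧ Multiset.card x ≤ Multiset.card y) z z'}

/-- The adjacent catenary degree of an element:
`c_adj(a) = sup{d(Z_k(a), Z_l(a)) : k, l ∈ L(a) adjacent}`. -/
noncomputable def cadj (a : α) : ℕ∞ :=
  sSup {r : ℕ∞ | ∃ k l : ℕ, Adjacent a k l ∧ r = (dS (Zk a k) (Zk a l) : ℕ∞)}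

noncomputable def catH (α : Type*) [CancelCommMonoid α] : ℕ∞ := ⨆ a : α, cat a
noncomputable def ceqH (α : Type*) [CancelCommMonoid α] : ℕ∞ := ⨆ a : α, ceq a
noncomputable def cmonH (α : Type*) [CancelCommMonoid α] : ℕ∞ := ⨆ a : α, cmon a
noncomputable def cadjH (α : Type*) [CancelCommMonoid α] : ℕ∞ := ⨆ a : α, cadj a

/-- `gcd(x, y) ≠ 1`: the two factorizations share an atom. -/
def RStep (x y : Fac α) : Prop := ∃ u, u ∈ x ∧ u ∈ y

/-- `z ≈ z'`: there is an `R`-chain concatenating `z` and `z'` in `Z a`. -/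
def RRel (a : α) (z z' : Fac α) : Prop := Chain a RStep z z'

/-- `z ≈_eq z'`: there is an equal-length `R`-chain concatenating `z` and `z'` in `Z a`. -/
def RRelEq (a : α) (z z' : Fac α) : Prop :=
  Chain a (fun x y => RStep x y ∧ Multiset.card x = Multiset.card y) z z'

/-- There is a monotone `R`-chain from `z` to `z'` in `Z a`. -/
def MonRChain (a : α) (z z' : Fac α) : Prop :=
  Chain a (fun x y => RStep x y ∧ Multiset.card x ≤ Multiset.card y) z z'

/-- `μ(a)`: the supremum, over the `R`-classes `ρ` of `Z a`, of the minimal length of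
an element of `ρ`. -/
noncomputable def mu (a : α) : ℕ∞ :=
  sSup {r : ℕ∞ | ∃ z ∈ Z a,
    r = ((sInf {n : ℕ | ∃ z', RRel a z z' ∧ Multiset.card z' = n} : ℕ) : ℕ∞)}

noncomputable def muH (α : Type*) [CancelCommMonoid α] : ℕ∞ := ⨆ a : α, mu a

/-- `μ_eq(a) = sup{k ∈ L(a) : Z_k(a) has more than one ≈_eq-class}`. -/
noncomputable def mueq (a : α) : ℕ∞ :=
  sSup {r : ℕ∞ | ∃ k ∈ L a,
    (∃ z ∈ Zk a k, ∃ z' ∈ Zk a k, ¬ RRelEq a z z') ∧ r = (k : ℕ∞)}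

noncomputable def mueqH (α : Type*) [CancelCommMonoid α] : ℕ∞ := ⨆ a : α, mueq a

/-- `μ_adj(a) = sup{k ∈ L(a) : d(Z_k(a), Z_l(a)) = k for the l ∈ L(a), l < k adjacent to k}`. -/
noncomputable def muadj (a : α) : ℕ∞ :=
  sSup {r : ℕ∞ | ∃ k ∈ L a,
    (∃ l : ℕ, Adjacent a l k ∧ dS (Zk a k) (Zk a l) = k) ∧ r = (k : ℕ∞)}

noncomputable def muadjH (α : Type*) [CancelCommMonoid α] : ℕ∞ := ⨆ a : α, muadj a

/-- The monoid of relations of `H`, as a subset of `Z(H) × Z(H)`. -/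
def relMon (α : Type*) [CancelCommMonoid α] : Set (Fac α × Fac α) :=
  {p | piF p.1 = piF p.2}

/-- The monoid of equal-length relations of `H`. -/
def relMonEq (α : Type*) [CancelCommMonoid α] : Set (Fac α × Fac α) :=
  {p | piF p.1 = piF p.2 ∧ Multiset.card p.1 = Multiset.card p.2}

/-- The monoid of monotone relations of `H`. -/
def relMonMon (α : Type*) [CancelCommMonoid α] : Set (Fac α × Fac α) :=
  {p | piF p.1 = piF p.2 ∧ Multiset.card p.1 ≤ Multiset.card p.2}

/-- `p` is an atom (irreducible element) of the reduced submonoid `S` of `Z(H) × Z(H)`. -/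
def IsAtomIn (S : Set (Fac α × Fac α)) (p : Fac α × Fac α) : Prop :=
  p ∈ S ∧ p ≠ 0 ∧ ∀ q ∈ S, ∀ r ∈ S, p = q + r → q = 0 ∨ r = 0

/-- `A_a(S) = A(S) ∩ (Z(a) × Z(a))`. -/
def AtomsAt (S : Set (Fac α × Fac α)) (a : α) : Set (Fac α × Fac α) :=
  {p | IsAtomIn S p ∧ p.1 ∈ Z a ∧ p.2 ∈ Z a}

/-- The tame degree `t(a, x)`. -/
noncomputable def tdeg (a : α) (x : Fac α) : ℕ∞ :=
  sInf {N : ℕ∞ | ∀ z ∈ Z a, (∃ w ∈ Z a, x ≤ w) →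
    ∃ z' ∈ Z a, x ≤ z' ∧ (d z z' : ℕ∞) ≤ N}

/-- The tame degree `t(H) = sup{t(a, u) : a ∈ H, u ∈ A(H)}`. -/
noncomputable def tH (α : Type*) [CancelCommMonoid α] : ℕ∞ :=
  ⨆ (a : α) (u : {u : α // Irreducible u}), tdeg a {u}

/-- The `m`-adjacent catenary degree of an element:
`c_{ad,m}(a) = sup{d(Z_k(a), Z_{[k-m,k)}(a)) : k ∈ L(a)}`. -/
noncomputable def cadm (m : ℕ) (a : α) : ℕ∞ :=
  sSup {r : ℕ∞ | ∃ k ∈ L a, r = (dS (Zk a k) (ZM a (Set.Ico (k - m) k)) : ℕ∞)}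

noncomputable def cadmH (α : Type*) [CancelCommMonoid α] (m : ℕ) : ℕ∞ := ⨆ a : α, cadm m a

/-- `μ_{ad,m}(a) = sup{k ∈ L(a) : d(Z_k(a), Z_{[k-m,k)}(a)) = k}`. -/
noncomputable def muadm (m : ℕ) (a : α) : ℕ∞ :=
  sSup {r : ℕ∞ | ∃ k ∈ L a, dS (Zk a k) (ZM a (Set.Ico (k - m) k)) = k ∧ r = (k : ℕ∞)}

noncomputable def muadmH (α : Type*) [CancelCommMonoid α] (m : ℕ) : ℕ∞ := ⨆ a : α, muadm m a

/-- `H` is reduced: the only unit is `1`. -/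
def Reduced (α : Type*) [CancelCommMonoid α] : Prop := ∀ a : α, IsUnit a → a = 1

/-- `H` is atomic: every element is a product of atoms. -/
def Atomic (α : Type*) [CancelCommMonoid α] : Prop := ∀ a : α, ∃ z : Fac α, piF z = a

/-- The ascending chain condition on principal ideals. -/
def ACCP (α : Type*) [CancelCommMonoid α] : Prop :=
  ∀ f : ℕ → α, (∀ n, f (n + 1) ∣ f n) → ∃ N, ∀ n, N ≤ n → f N ∣ f n


/-!
Every `k` counted by `μ_{ad,m}(a)` is one of the distances whose supremum is `c_{ad,m}(a)`, so
`μ_{ad,m}(a) ≤ c_{ad,m}(a)`. Conversely, let `z ∈ Z_k(a)` and `z' ∈ Z_{[k-m,k)}(a)` realize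
`d(Z_k(a), Z_{[k-m,k)}(a))`. Cancelling `x = gcd(z,z')` leaves factorizations `y, y'` of one element
`b` with `|y'| < |y| = d(z,z')`. Any pair for `b` lifts, after multiplying by `x`, to a pair for `a`
at the same distance, so `d(Z_{|y|}(b), Z_{[|y|-m,|y|)}(b)) = |y|` and hence
`d(z,z') ≤ μ_{ad,m}(b) ≤ μ_{ad,m}(H)`.
-/

lemma piF_add (x y : Fac α) : piF (x + y) = piF x * piF y := by
  simp [piF]

lemma add_mem_Z {b : α} {w : Fac α} (x : Fac α) (hw : w ∈ Z b) : w + x ∈ Z (b * piF x) := by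
  show piF (w + x) = b * piF x
  rw [piF_add, show piF w = b from hw]

section Distance

variable [DecidableEq {u : α // Irreducible u}]

lemma d_eq_max (z z' : Fac α) :
    d z z' = max (Multiset.card (z - z')) (Multiset.card (z' - z)) := by
  unfold d
  convert rfl

lemma d_add_right (x y w : Fac α) : d (x + w) (y + w) = d x y := by
  simp only [d_eq_max, add_tsub_add_eq_tsub_right]

lemma d_eq_card_sub_of_card_le {z z' : Fac α} (h : Multiset.card z' ≤ Multiset.card z) :
    d z z' = Multiset.card (z - z') := by
  have hz := congrArg Multiset.card (Multiset.sub_add_inter z z')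
  have hz' := congrArg Multiset.card (Multiset.sub_add_inter z' z)
  rw [Multiset.card_add, Multiset.inter_comm z' z] at hz'
  rw [Multiset.card_add] at hz
  rw [d_eq_max, max_eq_left (by omega)]

lemma d_le_card_of_card_le {z z' : Fac α} (h : Multiset.card z' ≤ Multiset.card z) :
    d z z' ≤ Multiset.card z := by
  rw [d_eq_card_sub_of_card_le h]
  exact Multiset.card_le_card (Multiset.sub_le_self z z')

end Distance

section SetDistance

variable {X Y : Set (Fac α)} {x y : Fac α}

lemma dS_le (hx : x ∈ X) (hy : y ∈ Y) : dS X Y ≤ d x y :=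
  Nat.sInf_le ⟨x, hx, y, hy, rfl⟩

lemma le_dS {n : ℕ} (hx : x ∈ X) (hy : y ∈ Y) (h : ∀ x ∈ X, ∀ y ∈ Y, n ≤ d x y) :
    n ≤ dS X Y :=
  le_csInf ⟨_, x, hx, y, hy, rfl⟩ fun _ ⟨x, hx, y, hy, hxy⟩ => hxy ▸ h x hx y hy

lemma dS_eq_zero_or_exists_d_eq (X Y : Set (Fac α)) :
    dS X Y = 0 ∨ ∃ x ∈ X, ∃ y ∈ Y, d x y = dS X Y := by
  rcases Set.eq_empty_or_nonempty {n | ∃ x ∈ X, ∃ y ∈ Y, d x y = n} with h | h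
  · left
    rw [dS, h, Nat.sInf_empty]
  · exact Or.inr (Nat.sInf_mem h)

end SetDistance

lemma muadm_le_cadm (m : ℕ) (a : α) : muadm m a ≤ cadm m a :=
  sSup_le fun _ ⟨k, hk, hdS, hr⟩ => le_sSup ⟨k, hk, by rw [hr, hdS]⟩

lemma dS_le_d_of_mul [DecidableEq {u : α // Irreducible u}] (m : ℕ) {b : α} {l : ℕ}
    (x : Fac α) {w w' : Fac α} (hw : w ∈ Zk b l) (hw' : w' ∈ ZM b (Set.Ico (l - m) l)) :
    dS (Zk (b * piF x) (l + Multiset.card x))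
      (ZM (b * piF x) (Set.Ico (l + Multiset.card x - m) (l + Multiset.card x))) ≤ d w w' := by
  have hw'len := hw'.2
  rw [Set.mem_Ico] at hw'len
  rw [← d_add_right w w' x]
  exact dS_le ⟨add_mem_Z x hw.1, by rw [Multiset.card_add, hw.2]⟩
    ⟨add_mem_Z x hw'.1, by rw [Multiset.card_add, Set.mem_Ico]; omega⟩

lemma dS_le_muadm_of_d_eq_dS [DecidableEq {u : α // Irreducible u}] (m : ℕ) {a : α} {k : ℕ}
    {z z' : Fac α} (hz : z ∈ Zk a k) (hz' : z' ∈ ZM a (Set.Ico (k - m) k))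
    (hmin : d z z' = dS (Zk a k) (ZM a (Set.Ico (k - m) k))) :
    (dS (Zk a k) (ZM a (Set.Ico (k - m) k)) : ℕ∞) ≤ muadm m (piF (z - z')) := by
  set x := z ∩ z'
  set y := z - z'
  set y' := z' - z
  have hzx : y + x = z := Multiset.sub_add_inter z z'
  have hz'x : y' + x = z' := by
    have := Multiset.sub_add_inter z' z
    rwa [Multiset.inter_comm] at this
  have hax : piF y * piF x = a := by rw [← piF_add, hzx]; exact hz.1
  have hy'b : piF y' = piF y :=
    mul_right_cancel (show piF y' * piF x = piF y * piF x by rw [hax, ← piF_add, hz'x]; exact hz'.1)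
  have hzk : Multiset.card y + Multiset.card x = k := by rw [← Multiset.card_add, hzx]; exact hz.2
  have hz'k : Multiset.card y' + Multiset.card x ∈ Set.Ico (k - m) k := by
    rw [← Multiset.card_add, hz'x]; exact hz'.2
  rw [Set.mem_Ico] at hz'k
  have hdzz' : d z z' = Multiset.card y := d_eq_card_sub_of_card_le <| by
    rw [← hzx, ← hz'x, Multiset.card_add, Multiset.card_add]; omega
  have hy : y ∈ Zk (piF y) (Multiset.card y) := ⟨rfl, rfl⟩
  have hy' : y' ∈ ZM (piF y) (Set.Ico (Multiset.card y - m) (Multiset.card y)) :=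
    ⟨hy'b, by rw [Set.mem_Ico]; omega⟩
  have hdS_eq : dS (Zk (piF y) (Multiset.card y))
      (ZM (piF y) (Set.Ico (Multiset.card y - m) (Multiset.card y))) = Multiset.card y := by
    refine le_antisymm ((dS_le hy hy').trans (d_le_card_of_card_le (by omega))) (le_dS hy hy' ?_)
    intro w hw w' hw'
    rw [← hdzz', hmin, ← hax, ← hzk]
    exact dS_le_d_of_mul m x hw hw'
  rw [← hmin, hdzz']
  exact le_sSup ⟨_, ⟨y, rfl, rfl⟩, hdS_eq, rfl⟩

lemma cadm_le_muadmH (m : ℕ) (a : α) : cadm m a ≤ muadmH α m := by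
  classical
  refine sSup_le fun _ ⟨k, _, hr⟩ => hr ▸ ?_
  obtain h0 | ⟨z, hz, z', hz', hmin⟩ := dS_eq_zero_or_exists_d_eq (Zk a k) (ZM a (Set.Ico (k - m) k))
  · simp [h0]
  · exact (dS_le_muadm_of_d_eq_dS m hz hz' hmin).trans (le_iSup (muadm m) _)

theorem stmt17_general {α : Type*} [CancelCommMonoid α] (m : ℕ) :
    (∀ a : α, muadm m a ≤ cadm m a) ∧ cadmH α m = muadmH α m :=
  ⟨muadm_le_cadm m, le_antisymm (iSup_le (cadm_le_muadmH m)) (iSup_mono (muadm_le_cadm m))⟩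

/-- Let `H` be a reduced, commutative, cancellative, atomic monoid and `m ∈ ℕ`. Then
`c_{ad,m}(a) ≥ μ_{ad,m}(a)` for every `a ∈ H`, and `c_{ad,m}(H) = μ_{ad,m}(H)`. -/
theorem stmt17 {α : Type*} [CancelCommMonoid α]
    (hred : Reduced α) (hatomic : Atomic α) (m : ℕ) (hm : 0 < m) :
    (∀ a : α, muadm m a ≤ cadm m a) ∧ cadmH α m = muadmH α m :=
  stmt17_general m

end CMR
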